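/- arXiv:2408.09659 — 2 statements merged into one kernel-verified Lean document; each statement's English description precedes it below -/
import Mathlib

section
/- The minimum of the conditional entropy over max-lift-feasible decompositions is attained on extreme points: suppose P_Y is a probability mass function on the finite set Y and W : Y → (X → ℝ) satisfies W_y ∈ Δ_ε for every y and Σ_y P_Y(y) · W_y = P_X (componentwise). Then there exist a finite set V of extreme points of Δ_ε and weights q : V → ℝ with q ≥ 0, Σ_{v ∈ V} q(v) = 1, Σ_{v ∈ V} q(v) · v = P_X, and Σ_{v ∈ V} q(v) h(v) ≤ Σ_y P_Y(y) h(W_y), where h(W) = −Σ_x W_x log W_x (with 0·log 0 = 0). -/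
/-!
An extreme point of a polyhedron is determined by the set of constraints it makes tight: if `y`
is tight wherever the extreme point `x` is, then `x` lies strictly between `y` and
`x + t (x - y)` for small `t > 0`, forcing `y = x`. Hence `Δ_ε` has finitely many extreme points,
and Krein–Milman (the convex hull of a finite set being closed) gives `Δ_ε = conv (ext Δ_ε)`.
Writing every `W_y` as a convex combination of the extreme points and mixing with `P_Y` yields
`q`; the entropy bound is Jensen's inequality for the concave `h`.
-/

open Filter Topology

section Polyhedron

variable {E ι : Type*} [AddCommGroup E] [Module ℝ E]

def polyhedron (g : ι → E →ₗ[ℝ] ℝ) (b : ι → ℝ) : Set E := {x | ∀ i, g i x ≤ b i}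

variable (g : ι → E →ₗ[ℝ] ℝ) (b : ι → ℝ)

theorem convex_polyhedron : Convex ℝ (polyhedron g b) := by
  simpa only [polyhedron, Set.ofPred_forall] using
    convex_iInter fun i => convex_halfSpace_le (g i).isLinear (b i)

theorem isClosed_polyhedron [TopologicalSpace E] (hg : ∀ i, Continuous (g i)) :
    IsClosed (polyhedron g b) := by
  simpa only [polyhedron, Set.ofPred_forall] using
    isClosed_iInter fun i => isClosed_le (hg i) continuous_const

theorem exists_pos_add_smul_sub_mem_polyhedron [Finite ι] {x y : E}
    (hx : x ∈ polyhedron g b) (htight : ∀ i, g i x = b i → g i y = b i) :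
    ∃ t : ℝ, 0 < t ∧ x + t • (x - y) ∈ polyhedron g b := by
  have hlin : ∀ i (t : ℝ), g i (x + t • (x - y)) = g i x + t * (g i x - g i y) := by
    intro i t; simp [map_sub]
  have hev : ∀ᶠ t in 𝓝 (0 : ℝ), ∀ i, g i (x + t • (x - y)) ≤ b i := by
    refine eventually_all.2 fun i => ?_
    simp only [hlin]
    rcases (hx i).eq_or_lt with htx | htx
    · exact Eventually.of_forall fun t => by simp [htx, htight i htx]
    · have hcont : Continuous fun t : ℝ => g i x + t * (g i x - g i y) := by fun_prop
      refine (hcont.continuousAt.eventually_lt continuousAt_const ?_).mono fun t ht => ht.le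
      simpa using htx
  obtain ⟨t, hmem, ht⟩ :=
    ((hev.filter_mono (nhdsWithin_le_nhds (s := Set.Ioi 0))).and self_mem_nhdsWithin).exists
  exact ⟨t, ht, hmem⟩

theorem eq_of_mem_extremePoints_polyhedron [Finite ι] {x y : E}
    (hx : x ∈ (polyhedron g b).extremePoints ℝ) (hy : y ∈ polyhedron g b)
    (htight : ∀ i, g i x = b i → g i y = b i) : y = x := by
  obtain ⟨t, ht, hz⟩ := exists_pos_add_smul_sub_mem_polyhedron g b hx.1 htight
  -- `x = t/(1+t) • y + 1/(1+t) • (x + t • (x - y))`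
  refine hx.2 hy hz ⟨t / (1 + t), 1 / (1 + t), by positivity, by positivity, ?_, ?_⟩
  · field_simp; ring
  · match_scalars <;> field_simp
    ring

theorem finite_extremePoints_polyhedron [Finite ι] :
    ((polyhedron g b).extremePoints ℝ).Finite := by
  refine Set.Finite.of_finite_image (f := fun x => {i | g i x = b i}) (Set.toFinite _) ?_
  intro x hx y hy hxy
  refine (eq_of_mem_extremePoints_polyhedron g b hx hy.1 fun i hi => ?_).symm
  exact (Set.ext_iff.1 hxy i).1 hi

theorem convexHull_extremePoints_polyhedron [Finite ι] [TopologicalSpace E] [T2Space E]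
    [IsTopologicalAddGroup E] [ContinuousSMul ℝ E] [LocallyConvexSpace ℝ E]
    (hcompact : IsCompact (polyhedron g b)) :
    convexHull ℝ ((polyhedron g b).extremePoints ℝ) = polyhedron g b := by
  conv_rhs => rw [← closure_convexHull_extremePoints hcompact (convex_polyhedron g b)]
  exact ((finite_extremePoints_polyhedron g b).isCompact_convexHull ℝ).isClosed.closure_eq.symm

end Polyhedron

theorem concaveOn_entropy {ι : Type*} [Fintype ι] :
    ConcaveOn ℝ (Set.Ici 0) fun v : ι → ℝ => -∑ i, v i * Real.log (v i) := by
  refine ⟨convex_Ici 0, fun v hv w hw a b ha hb hab => ?_⟩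
  have key := fun i => Real.concaveOn_negMulLog.2 (hv i) (hw i) ha hb hab
  simp only [smul_eq_mul, Real.negMulLog] at key
  simp only [smul_eq_mul, Pi.add_apply, Pi.smul_apply, mul_neg, ← Finset.sum_neg_distrib,
    Finset.mul_sum, ← Finset.sum_add_distrib]
  exact Finset.sum_le_sum fun i _ => by linarith [key i]

theorem sum_mixture_mul {R α β : Type*} [CommSemiring R] (s : Finset α) (t : Finset β)
    (p : α → R) (w : α → β → R) (f : β → R) :
    ∑ v ∈ t, (∑ y ∈ s, p y * w y v) * f v = ∑ y ∈ s, p y * ∑ v ∈ t, w y v * f v := by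
  simp_rw [Finset.sum_mul, Finset.mul_sum, mul_assoc]
  exact Finset.sum_comm

theorem exists_polyhedron_eq_simplex_inter_halfSpaces {X S : Type*} [Fintype X]
    (c : S → X → ℝ) (r : ℝ) :
    ∃ (g : X ⊕ S ⊕ Bool → (X → ℝ) →ₗ[ℝ] ℝ) (b : X ⊕ S ⊕ Bool → ℝ), polyhedron g b =
      {W | (∀ x, 0 ≤ W x) ∧ (∑ x, W x = 1) ∧ ∀ s, ∑ x, c s x * W x ≤ r} := by
  refine ⟨Sum.elim (fun x => -LinearMap.proj x) <| Sum.elim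
      (fun s => ∑ x, c s x • LinearMap.proj x)
      (fun up => bif up then ∑ x, LinearMap.proj x else -∑ x, LinearMap.proj x),
    Sum.elim 0 <| Sum.elim (fun _ => r) (fun up => bif up then 1 else -1), ?_⟩
  ext W
  simp [polyhedron, Sum.forall, Bool.forall_bool, le_antisymm_iff, and_comm, and_assoc]

theorem entropy_min_attained_on_extreme_points_general
    {S X Y : Type*} [Fintype S] [Fintype X] [Fintype Y]
    (PSX : S → X → ℝ)
    (ε : ℝ)
    (Δ : Set (X → ℝ))
    (hΔ : Δ = {W : X → ℝ | (∀ x, 0 ≤ W x) ∧ (∑ x, W x = 1) ∧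
        ∀ s, ∑ x, (PSX s x / ∑ s', PSX s' x) / (∑ x', PSX s x') * W x ≤ Real.exp ε})
    (PY : Y → ℝ) (hPY_nonneg : ∀ y, 0 ≤ PY y) (hPY_sum : ∑ y, PY y = 1)
    (W : Y → X → ℝ) (hW : ∀ y, W y ∈ Δ)
    (hdecomp : ∀ x, ∑ y, PY y * W y x = ∑ s, PSX s x) :
    ∃ (V : Finset (X → ℝ)) (q : (X → ℝ) → ℝ),
      (↑V : Set (X → ℝ)) ⊆ Set.extremePoints ℝ Δ ∧
      (∀ v ∈ V, 0 ≤ q v) ∧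
      (∑ v ∈ V, q v = 1) ∧
      (∀ x, ∑ v ∈ V, q v * v x = ∑ s, PSX s x) ∧
      (∑ v ∈ V, q v * (-∑ x, v x * Real.log (v x)) ≤
        ∑ y, PY y * (-∑ x, W y x * Real.log (W y x))) := by
  obtain ⟨g, b, hpoly⟩ := exists_polyhedron_eq_simplex_inter_halfSpaces
    (fun s x => (PSX s x / ∑ s', PSX s' x) / (∑ x', PSX s x')) (Real.exp ε)
  rw [← hpoly] at hΔ
  subst hΔ
  have hsimplex : polyhedron g b ⊆ stdSimplex ℝ X := by
    rw [hpoly]; exact fun v hv => ⟨hv.1, hv.2.1⟩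
  have hcompact : IsCompact (polyhedron g b) :=
    (isCompact_stdSimplex ℝ X).of_isClosed_subset
      (isClosed_polyhedron g b fun i => (g i).continuous_of_finiteDimensional) hsimplex
  set V := (finite_extremePoints_polyhedron g b).toFinset
  have hhull : ∀ y, W y ∈ convexHull ℝ (V : Set (X → ℝ)) := fun y => by
    rw [Set.Finite.coe_toFinset, convexHull_extremePoints_polyhedron g b hcompact]
    exact hW y
  choose w hw_nonneg hw_sum hw_eq using fun y => Finset.mem_convexHull'.1 (hhull y)
  have hw_eval : ∀ y x, ∑ v ∈ V, w y v * v x = W y x := fun y x => by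
    simpa using congrFun (hw_eq y) x
  refine ⟨V, fun v => ∑ y, PY y * w y v, by simp [V], fun v hv => ?_, ?_, fun x => ?_, ?_⟩
  · exact Finset.sum_nonneg fun y _ => mul_nonneg (hPY_nonneg y) (hw_nonneg y v hv)
  · simpa [hw_sum, hPY_sum] using sum_mixture_mul Finset.univ V PY w 1
  · rw [sum_mixture_mul, ← hdecomp x]
    simp only [hw_eval]
  · rw [sum_mixture_mul]
    refine Finset.sum_le_sum fun y _ => mul_le_mul_of_nonneg_left ?_ (hPY_nonneg y)
    have hV : ∀ v ∈ V, v ∈ Set.Ici 0 := fun v hv =>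
      (hsimplex (extremePoints_subset ((Set.Finite.mem_toFinset _).1 hv))).1
    simpa [← hw_eq y] using concaveOn_entropy.le_map_sum (hw_nonneg y) (hw_sum y) hV

/-- The minimum of the conditional entropy over max-lift-feasible
decompositions is attained on extreme points of the polytope Δ_ε. -/
theorem entropy_min_attained_on_extreme_points
    {S X Y : Type*} [Fintype S] [Fintype X] [Fintype Y]
    [Nonempty S] [Nonempty X] [Nonempty Y]
    (PSX : S → X → ℝ)
    (hPSX : ∀ s x, 0 ≤ PSX s x)
    (hsum : ∑ s, ∑ x, PSX s x = 1)
    (hPS : ∀ s, 0 < ∑ x, PSX s x)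
    (hPX : ∀ x, 0 < ∑ s, PSX s x)
    (ε : ℝ) (hε : 0 ≤ ε)
    (Δ : Set (X → ℝ))
    (hΔ : Δ = {W : X → ℝ | (∀ x, 0 ≤ W x) ∧ (∑ x, W x = 1) ∧
        ∀ s, ∑ x, (PSX s x / ∑ s', PSX s' x) / (∑ x', PSX s x') * W x ≤ Real.exp ε})
    (PY : Y → ℝ) (hPY_nonneg : ∀ y, 0 ≤ PY y) (hPY_sum : ∑ y, PY y = 1)
    (W : Y → X → ℝ) (hW : ∀ y, W y ∈ Δ)
    (hdecomp : ∀ x, ∑ y, PY y * W y x = ∑ s, PSX s x) :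
    ∃ (V : Finset (X → ℝ)) (q : (X → ℝ) → ℝ),
      (↑V : Set (X → ℝ)) ⊆ Set.extremePoints ℝ Δ ∧
      (∀ v ∈ V, 0 ≤ q v) ∧
      (∑ v ∈ V, q v = 1) ∧
      (∀ x, ∑ v ∈ V, q v * v x = ∑ s, PSX s x) ∧
      (∑ v ∈ V, q v * (-∑ x, v x * Real.log (v x)) ≤
        ∑ y, PY y * (-∑ x, W y x * Real.log (W y x))) :=
  entropy_min_attained_on_extreme_points_general PSX ε Δ hΔ PY hPY_nonneg hPY_sum W hW hdecomp
end

section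
/- If for some y ∈ Y the posterior has full support (P(s,y) > 0 for all s ∈ S) and the average log-lift satisfies 𝔏(y) = ε for some ε > 0, then the maximum lift strictly exceeds e^ε: max_{s ∈ S} l(s,y) > e^ε. -/
/-- If the posterior at y has full support and the average log-lift satisfies
𝔏(y) = ε for some ε > 0, then the maximum lift strictly exceeds e^ε. -/
theorem max_lift_gt_exp_of_avg_log_lift_eq
    {S Y : Type*} [Fintype S] [Fintype Y] [Nonempty S] [Nonempty Y]
    (P : S → Y → ℝ) (ε : ℝ) (y : Y)
    (hP : ∀ s y, 0 ≤ P s y)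
    (hsum : ∑ s, ∑ y, P s y = 1)
    (hPS : ∀ s, 0 < ∑ y', P s y')
    (hPY : ∀ y, 0 < ∑ s', P s' y)
    (hsupp : ∀ s, 0 < P s y)
    (hε : 0 < ε)
    (hL : ∑ s, (P s y / ∑ s', P s' y) *
        Real.log ((P s y / ∑ s', P s' y) / (∑ y', P s y')) = ε) :
    Real.exp ε <
      Finset.univ.sup' Finset.univ_nonempty
        fun s => (P s y / ∑ s', P s' y) / (∑ y', P s y') := by
  by_contra hcon
  push_neg at hcon
  set PY := ∑ s', P s' y with hPYdef
  have hPYpos : 0 < PY := hPY y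
  have hl : ∀ s : S, (P s y / PY) / (∑ y', P s y') ≤ Real.exp ε := fun s =>
    le_trans (Finset.le_sup' (fun s => (P s y / PY) / (∑ y', P s y')) (Finset.mem_univ s)) hcon
  have hw : ∀ s : S, 0 < P s y / PY := fun s => div_pos (hsupp s) hPYpos
  have hlpos : ∀ s : S, 0 < (P s y / PY) / (∑ y', P s y') := fun s =>
    div_pos (hw s) (hPS s)
  have hlog : ∀ s : S, Real.log ((P s y / PY) / (∑ y', P s y')) ≤ ε := fun s =>
    (Real.log_le_iff_le_exp (hlpos s)).mpr (hl s)
  have hwsum : ∑ s, P s y / PY = 1 := by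
    rw [← Finset.sum_div]
    exact div_self (ne_of_gt hPYpos)
  have hzero : ∑ s, (P s y / PY) * (ε - Real.log ((P s y / PY) / (∑ y', P s y'))) = 0 := by
    have : ∀ s : S, (P s y / PY) * (ε - Real.log ((P s y / PY) / (∑ y', P s y')))
        = (P s y / PY) * ε - (P s y / PY) * Real.log ((P s y / PY) / (∑ y', P s y')) :=
      fun s => mul_sub _ _ _
    rw [Finset.sum_congr rfl (fun s _ => this s), Finset.sum_sub_distrib, hL,
      ← Finset.sum_mul, hwsum, one_mul, sub_self]
  have heach : ∀ s ∈ Finset.univ,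
      (P s y / PY) * (ε - Real.log ((P s y / PY) / (∑ y', P s y'))) = 0 := by
    rw [← Finset.sum_eq_zero_iff_of_nonneg]
    · exact hzero
    · intro s _
      exact mul_nonneg (le_of_lt (hw s)) (sub_nonneg.mpr (hlog s))
  have hle : ∀ s : S, (P s y / PY) / (∑ y', P s y') = Real.exp ε := by
    intro s
    have h0 := heach s (Finset.mem_univ s)
    have h1 : ε - Real.log ((P s y / PY) / (∑ y', P s y')) = 0 := by
      rcases mul_eq_zero.mp h0 with h | h
      · exact absurd h (ne_of_gt (hw s))
      · exact h
    have h2 : Real.log ((P s y / PY) / (∑ y', P s y')) = ε := by linarith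
    rw [← h2, Real.exp_log (hlpos s)]
  have hweq : ∀ s : S, P s y / PY = Real.exp ε * (∑ y', P s y') := by
    intro s
    exact (div_eq_iff (ne_of_gt (hPS s))).mp (hle s)
  have hsum1 : ∑ s, (∑ y', P s y') = 1 := hsum
  have : (1 : ℝ) = Real.exp ε := by
    calc (1 : ℝ) = ∑ s, P s y / PY := hwsum.symm
      _ = ∑ s, Real.exp ε * (∑ y', P s y') := Finset.sum_congr rfl fun s _ => hweq s
      _ = Real.exp ε * ∑ s, (∑ y', P s y') := by rw [Finset.mul_sum]
      _ = Real.exp ε := by rw [hsum1, mul_one]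
  have h2 : ε + 1 ≤ Real.exp ε := Real.add_one_le_exp ε
  linarith [this, h2]
end
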